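/- arXiv:2012.04848 — 3 statements merged into one kernel-verified Lean document; each statement's English description precedes it below -/
import Mathlib

section
/- Projection lemma: Let H₁ and H₂ be Hermitian operators on a nonzero finite-dimensional complex inner product space H, and let S ⊆ H be a nonzero subspace with orthogonal complement S⊥. Assume H₂ v = 0 for every v ∈ S, and assume there is a real number J > 2‖H₁‖ such that ⟨v, H₂ v⟩ ≥ J‖v‖² for every v ∈ S⊥. Then λ(H₁|_S) − ‖H₁‖²/(J − 2‖H₁‖) ≤ λ(H₁ + H₂) ≤ λ(H₁|_S). (Lemma A.2 of the paper, after Kempe–Kitaev–Regev.) -/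
open scoped ComplexInnerProductSpace

/-- The smallest eigenvalue of a Hermitian operator `A`, i.e. the infimum of
`⟨v, A v⟩` over unit vectors `v`. -/
noncomputable def lambdaMin {H : Type*} [NormedAddCommGroup H] [InnerProductSpace ℂ H]
    (A : H →L[ℂ] H) : ℝ :=
  ⨅ v : {v : H // ‖v‖ = 1}, (⟪(v : H), A v⟫).re

/-- The smallest eigenvalue of the compression of `A` to a subspace `S`, i.e. the
infimum of `⟨v, A v⟩` over unit vectors `v ∈ S`. -/
noncomputable def lambdaMinOn {H : Type*} [NormedAddCommGroup H] [InnerProductSpace ℂ H]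
    (A : H →L[ℂ] H) (S : Submodule ℂ H) : ℝ :=
  ⨅ v : {v : H // v ∈ S ∧ ‖v‖ = 1}, (⟪(v : H), A v⟫).re

/-!
Split a unit vector as `v = x + y` with `x ∈ S`, `y ∈ Sᗮ`. Because `H₂` is self-adjoint and kills
`S`, only `⟨y, H₂ y⟩ ≥ J ‖y‖²` survives of `H₂`, so
`⟨v, (H₁ + H₂) v⟩ ≥ λ(H₁|_S) ‖x‖² - 2 ‖H₁‖ ‖x‖ ‖y‖ + (J - ‖H₁‖) ‖y‖²`. With `‖x‖² + ‖y‖² = 1` and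
`λ(H₁|_S) ≤ ‖H₁‖`, completing the square in `‖y‖` bounds this below by
`λ(H₁|_S) - ‖H₁‖² / (J - 2 ‖H₁‖)`. The upper bound holds because `H₁ + H₂` agrees with `H₁` on `S`.
-/

lemma sub_sq_div_le_of_sq_add_sq_eq_one {L K J a b : ℝ} (hK : 0 ≤ K) (hKJ : 2 * K < J)
    (hLK : L ≤ K) (hb : 0 ≤ b) (hab : a ^ 2 + b ^ 2 = 1) :
    L - K ^ 2 / (J - 2 * K) ≤ L * a ^ 2 - 2 * K * a * b + (J - K) * b ^ 2 := by
  have hD : 0 < J - 2 * K := by linarith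
  have hsq : 0 ≤ (J - 2 * K) * b ^ 2 - 2 * K * b + K ^ 2 / (J - 2 * K) := by
    have : (J - 2 * K) * b ^ 2 - 2 * K * b + K ^ 2 / (J - 2 * K) =
        ((J - 2 * K) * b - K) ^ 2 / (J - 2 * K) := by
      field_simp
      ring
    rw [this]
    positivity
  have ha : a ≤ 1 := by nlinarith
  nlinarith [mul_nonneg (mul_nonneg hK hb) (sub_nonneg.mpr ha),
    mul_nonneg (sub_nonneg.mpr hLK) (sq_nonneg b)]

section LambdaMin

variable {H : Type*} [NormedAddCommGroup H] [InnerProductSpace ℂ H]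

lemma abs_re_inner_le_opNorm_mul (A : H →L[ℂ] H) (x y : H) :
    |(⟪x, A y⟫).re| ≤ ‖A‖ * ‖x‖ * ‖y‖ :=
  calc |(⟪x, A y⟫).re| ≤ ‖⟪x, A y⟫‖ := Complex.abs_re_le_norm _
    _ ≤ ‖x‖ * ‖A y‖ := norm_inner_le_norm _ _
    _ ≤ ‖x‖ * (‖A‖ * ‖y‖) := by gcongr; exact A.le_opNorm y
    _ = ‖A‖ * ‖x‖ * ‖y‖ := by ring

lemma abs_re_inner_apply_self_le_opNorm (A : H →L[ℂ] H) {v : H} (hv : ‖v‖ = 1) :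
    |(⟪v, A v⟫).re| ≤ ‖A‖ := by
  simpa [hv] using abs_re_inner_le_opNorm_mul A v v

lemma bddBelow_range_re_inner_apply_self {ι : Type*} (A : H →L[ℂ] H) {f : ι → H}
    (hf : ∀ i, ‖f i‖ = 1) : BddBelow (Set.range fun i ↦ (⟪f i, A (f i)⟫).re) := by
  refine ⟨-‖A‖, ?_⟩
  rintro _ ⟨i, rfl⟩
  exact neg_le_of_abs_le (abs_re_inner_apply_self_le_opNorm A (hf i))

lemma re_inner_ofReal_smul_apply_ofReal_smul (A : H →L[ℂ] H) (r : ℝ) (v : H) :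
    (⟪(r : ℂ) • v, A ((r : ℂ) • v)⟫).re = r ^ 2 * (⟪v, A v⟫).re := by
  rw [map_smul, inner_smul_left, inner_smul_right, Complex.conj_ofReal, ← mul_assoc,
    ← Complex.ofReal_mul, Complex.re_ofReal_mul, sq]

lemma lambdaMin_le_re_inner (A : H →L[ℂ] H) {v : H} (hv : ‖v‖ = 1) :
    lambdaMin A ≤ (⟪v, A v⟫).re :=
  ciInf_le (bddBelow_range_re_inner_apply_self A fun v : {v : H // ‖v‖ = 1} ↦ v.2) ⟨v, hv⟩

lemma le_lambdaMin [Nontrivial H] {A : H →L[ℂ] H} {c : ℝ}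
    (h : ∀ v : H, ‖v‖ = 1 → c ≤ (⟪v, A v⟫).re) : c ≤ lambdaMin A := by
  obtain ⟨v, hv⟩ := exists_norm_eq H zero_le_one
  have : Nonempty {v : H // ‖v‖ = 1} := ⟨⟨v, hv⟩⟩
  exact le_ciInf fun v ↦ h v v.2

lemma lambdaMinOn_le_re_inner (A : H →L[ℂ] H) {S : Submodule ℂ H} {v : H} (hvS : v ∈ S)
    (hv : ‖v‖ = 1) : lambdaMinOn A S ≤ (⟪v, A v⟫).re :=
  ciInf_le (bddBelow_range_re_inner_apply_self A
    fun v : {v : H // v ∈ S ∧ ‖v‖ = 1} ↦ v.2.2) ⟨v, hvS, hv⟩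

lemma lambdaMinOn_mul_norm_sq_le_re_inner (A : H →L[ℂ] H) {S : Submodule ℂ H} {v : H}
    (hvS : v ∈ S) : lambdaMinOn A S * ‖v‖ ^ 2 ≤ (⟪v, A v⟫).re := by
  rcases eq_or_ne v 0 with rfl | hv0
  · simp
  have hunit : ‖((‖v‖⁻¹ : ℝ) : ℂ) • v‖ = 1 := by
    rw [norm_smul, Complex.norm_real, norm_inv, norm_norm,
      inv_mul_cancel₀ (norm_ne_zero_iff.mpr hv0)]
  have hu := lambdaMinOn_le_re_inner A (S.smul_mem _ hvS) hunit
  rw [re_inner_ofReal_smul_apply_ofReal_smul, inv_pow,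
    ← div_eq_inv_mul, le_div_iff₀ (by positivity)] at hu
  exact hu

lemma lambdaMinOn_le_opNorm (A : H →L[ℂ] H) (S : Submodule ℂ H) : lambdaMinOn A S ≤ ‖A‖ := by
  rcases isEmpty_or_nonempty {v : H // v ∈ S ∧ ‖v‖ = 1} with h | ⟨v, hvS, hv⟩
  · rw [lambdaMinOn, Real.iInf_of_isEmpty]
    exact norm_nonneg A
  · exact (lambdaMinOn_le_re_inner A hvS hv).trans
      (le_of_abs_le (abs_re_inner_apply_self_le_opNorm A hv))

lemma lambdaMinOn_congr {A B : H →L[ℂ] H} {S : Submodule ℂ H} (h : ∀ v ∈ S, A v = B v) :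
    lambdaMinOn A S = lambdaMinOn B S :=
  iInf_congr fun v ↦ by rw [h v v.2.1]

lemma lambdaMin_le_lambdaMinOn (A : H →L[ℂ] H) {S : Submodule ℂ H} (hS : S ≠ ⊥) :
    lambdaMin A ≤ lambdaMinOn A S := by
  have : Nontrivial S := Submodule.nontrivial_iff_ne_bot.mpr hS
  obtain ⟨v, hv⟩ := exists_norm_eq S zero_le_one
  have : Nonempty {v : H // v ∈ S ∧ ‖v‖ = 1} := ⟨⟨v, v.2, hv⟩⟩
  exact le_ciInf fun v ↦ lambdaMin_le_re_inner A v.2.2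

variable {A B : H →L[ℂ] H} {S : Submodule ℂ H} {J : ℝ}

lemma le_re_inner_add_apply_self (hB : ∀ x y : H, ⟪B x, y⟫ = ⟪x, B y⟫)
    (hBS : ∀ v ∈ S, B v = 0) (hgap : ∀ v ∈ Sᗮ, J * ‖v‖ ^ 2 ≤ (⟪v, B v⟫).re)
    {x y : H} (hx : x ∈ S) (hy : y ∈ Sᗮ) :
    lambdaMinOn A S * ‖x‖ ^ 2 - 2 * ‖A‖ * ‖x‖ * ‖y‖ + (J - ‖A‖) * ‖y‖ ^ 2 ≤
      (⟪x + y, (A + B) (x + y)⟫).re := by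
  have hBx : B x = 0 := hBS x hx
  have hxBy : ⟪x, B y⟫ = 0 := by rw [← hB, hBx, inner_zero_left]
  have hexpand : (⟪x + y, (A + B) (x + y)⟫).re = (⟪x, A x⟫).re + (⟪x, A y⟫).re +
      (⟪y, A x⟫).re + (⟪y, A y⟫).re + (⟪y, B y⟫).re := by
    simp only [add_apply, map_add, hBx, inner_add_left, inner_add_right, hxBy, add_zero,
      Complex.add_re, Complex.zero_re]
    ring
  have hxx := lambdaMinOn_mul_norm_sq_le_re_inner A hx
  have hxy := neg_le_of_abs_le (abs_re_inner_le_opNorm_mul A x y)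
  have hyx := neg_le_of_abs_le (abs_re_inner_le_opNorm_mul A y x)
  have hyy := neg_le_of_abs_le (abs_re_inner_le_opNorm_mul A y y)
  have hyBy := hgap y hy
  rw [hexpand]
  linarith

theorem sub_sq_div_le_lambdaMin [Nontrivial H] [S.HasOrthogonalProjection]
    (hB : ∀ x y : H, ⟪B x, y⟫ = ⟪x, B y⟫) (hBS : ∀ v ∈ S, B v = 0) (hJ : 2 * ‖A‖ < J)
    (hgap : ∀ v ∈ Sᗮ, J * ‖v‖ ^ 2 ≤ (⟪v, B v⟫).re) :
    lambdaMinOn A S - ‖A‖ ^ 2 / (J - 2 * ‖A‖) ≤ lambdaMin (A + B) := by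
  refine le_lambdaMin fun v hv ↦ ?_
  obtain ⟨x, hx, y, hy, rfl⟩ := S.exists_add_mem_mem_orthogonal v
  have hpyth : ‖x‖ ^ 2 + ‖y‖ ^ 2 = 1 := by
    have := norm_add_sq_eq_norm_sq_add_norm_sq_of_inner_eq_zero x y
      (S.inner_right_of_mem_orthogonal hx hy)
    rw [hv] at this
    linear_combination -this
  calc _ ≤ _ := sub_sq_div_le_of_sq_add_sq_eq_one (norm_nonneg A) hJ
        (lambdaMinOn_le_opNorm A S) (norm_nonneg y) hpyth
    _ ≤ _ := le_re_inner_add_apply_self hB hBS hgap hx hy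

end LambdaMin

theorem projection_lemma_general {H : Type*} [NormedAddCommGroup H] [InnerProductSpace ℂ H]
    [FiniteDimensional ℂ H] [Nontrivial H]
    (H1 H2 : H →L[ℂ] H)
    (h2 : ∀ x y : H, ⟪H2 x, y⟫ = ⟪x, H2 y⟫)
    (S : Submodule ℂ H) (hS : S ≠ ⊥)
    (hker : ∀ v ∈ S, H2 v = 0)
    (J : ℝ) (hJ : J > 2 * ‖H1‖)
    (hgap : ∀ v ∈ Sᗮ, (⟪v, H2 v⟫).re ≥ J * ‖v‖ ^ 2) :
    lambdaMinOn H1 S - ‖H1‖ ^ 2 / (J - 2 * ‖H1‖) ≤ lambdaMin (H1 + H2) ∧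
      lambdaMin (H1 + H2) ≤ lambdaMinOn H1 S := by
  refine ⟨sub_sq_div_le_lambdaMin h2 hker hJ hgap, ?_⟩
  have hcompress : lambdaMinOn (H1 + H2) S = lambdaMinOn H1 S :=
    lambdaMinOn_congr fun v hv ↦ by rw [add_apply, hker v hv, add_zero]
  exact hcompress ▸ lambdaMin_le_lambdaMinOn (H1 + H2) hS

/-- **Lemma A.2 (projection lemma).** Let `H₁, H₂` be Hermitian operators on a nonzero
finite-dimensional complex inner product space, `S` a nonzero subspace with `H₂ v = 0`
for `v ∈ S`, and suppose `⟨v, H₂ v⟩ ≥ J ‖v‖²` on `S⊥` for some `J > 2‖H₁‖`. Then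
`λ(H₁|_S) − ‖H₁‖²/(J − 2‖H₁‖) ≤ λ(H₁ + H₂) ≤ λ(H₁|_S)`. -/
theorem projection_lemma {H : Type*} [NormedAddCommGroup H] [InnerProductSpace ℂ H]
    [FiniteDimensional ℂ H] [Nontrivial H]
    (H1 H2 : H →L[ℂ] H)
    (h1 : ∀ x y : H, ⟪H1 x, y⟫ = ⟪x, H1 y⟫)
    (h2 : ∀ x y : H, ⟪H2 x, y⟫ = ⟪x, H2 y⟫)
    (S : Submodule ℂ H) (hS : S ≠ ⊥)
    (hker : ∀ v ∈ S, H2 v = 0)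
    (J : ℝ) (hJ : J > 2 * ‖H1‖)
    (hgap : ∀ v ∈ Sᗮ, (⟪v, H2 v⟫).re ≥ J * ‖v‖ ^ 2) :
    lambdaMinOn H1 S - ‖H1‖ ^ 2 / (J - 2 * ‖H1‖) ≤ lambdaMin (H1 + H2) ∧
      lambdaMin (H1 + H2) ≤ lambdaMinOn H1 S :=
  projection_lemma_general H1 H2 h2 S hS hker J hJ hgap
end

section
/- Let H be a Hermitian operator on a nonzero finite-dimensional complex inner product space, let ψ be a unit vector with H ψ = 0, and suppose ⟨φ, H φ⟩ ≥ (3/4)‖φ‖² for every vector φ orthogonal to ψ. Let ρ be a positive semidefinite operator with trace 1 (a density operator) satisfying Tr(H ρ) ≤ ε for some 0 < ε < 1. Then ⟨ψ, ρ ψ⟩ ≥ 1 − (4/3)ε. (Mixed-state overlap bound underlying Theorem A.7.) -/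
/-!
The spectral gap says that `A ≥ (3/4) (1 - |ψ⟩⟨ψ|)` in the Loewner order. Pairing with a
density operator is monotone for this order: in an eigenbasis `bᵢ` of `ρ` with eigenvalues
`μᵢ ≥ 0`, `Tr (S ρ) = ∑ μᵢ ⟪bᵢ, S bᵢ⟫`. Hence
`ε ≥ Tr (A ρ) ≥ (3/4) (Tr ρ - ⟪ψ, ρ ψ⟫) = (3/4) (1 - ⟪ψ, ρ ψ⟫)`.
-/

open scoped ComplexInnerProductSpace InnerProductSpace ComplexOrder
open InnerProductSpace RCLike

namespace LinearMap

variable {𝕜 E : Type*} [RCLike 𝕜] [NormedAddCommGroup E] [InnerProductSpace 𝕜 E]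

lemma smul_one_sub_rankOne_le_of_gap {A : E →ₗ[𝕜] E} (hA : A.IsSymmetric) {ψ : E}
    (hψ : ‖ψ‖ = 1) (hAψ : A ψ = 0) {g : ℝ}
    (hgap : ∀ φ, ⟪ψ, φ⟫_𝕜 = 0 → g * ‖φ‖ ^ 2 ≤ re ⟪φ, A φ⟫_𝕜) :
    (g : 𝕜) • (1 - (rankOne 𝕜 ψ ψ : E →ₗ[𝕜] E)) ≤ A := by
  refine ⟨hA.sub ((IsSymmetric.one.sub (isSymmetric_rankOne_self ψ)).smul (conj_ofReal g)),
    fun v => ?_⟩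
  set φ := v - ⟪ψ, v⟫_𝕜 • ψ
  have hψφ : ⟪ψ, φ⟫_𝕜 = 0 := by
    simp [φ, inner_sub_right, inner_smul_right, inner_self_eq_norm_sq_to_K, hψ]
  have hφψ : ⟪φ, ψ⟫_𝕜 = 0 := by rw [← inner_conj_symm, hψφ, map_zero]
  have hAφψ : ⟪A φ, ψ⟫_𝕜 = 0 := by rw [hA, hAψ, inner_zero_right]
  have hv : v = φ + ⟪ψ, v⟫_𝕜 • ψ := by simp [φ]
  have hAv : A v = A φ := by rw [hv, map_add, map_smul, hAψ, smul_zero, add_zero]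
  have hPv : (1 - (rankOne 𝕜 ψ ψ : E →ₗ[𝕜] E)) v = φ := by simp [φ]
  have key : re ⟪(A - (g : 𝕜) • (1 - (rankOne 𝕜 ψ ψ : E →ₗ[𝕜] E))) v, v⟫_𝕜
      = re ⟪φ, A φ⟫_𝕜 - g * ‖φ‖ ^ 2 := by
    rw [sub_apply, smul_apply, hPv, hAv, inner_sub_left, inner_smul_left, hv]
    simp [inner_add_right, inner_smul_right, hAφψ, hφψ, inner_self_eq_norm_sq_to_K,
      inner_re_symm (𝕜 := 𝕜) (A φ)]
  rw [key, sub_nonneg]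
  exact hgap φ hψφ

variable [FiniteDimensional 𝕜 E]

lemma trace_rankOne_comp (x y : E) (T : E →ₗ[𝕜] E) :
    ((rankOne 𝕜 x y : E →ₗ[𝕜] E) ∘ₗ T).trace 𝕜 E = ⟪y, T x⟫_𝕜 := by
  rw [trace_comp_comm', ← trace_rankOne (𝕜 := 𝕜) (T x) y]
  congr 1
  ext z
  simp

lemma IsSymmetric.trace_comp_eq_sum {T : E →ₗ[𝕜] E} (hT : T.IsSymmetric) {n : ℕ}
    (hn : Module.finrank 𝕜 E = n) (S : E →ₗ[𝕜] E) :
    (S ∘ₗ T).trace 𝕜 E = ∑ i, (hT.eigenvalues hn i : 𝕜) *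
      ⟪hT.eigenvectorBasis hn i, S (hT.eigenvectorBasis hn i)⟫_𝕜 := by
  simp only [trace_eq_sum_inner _ (hT.eigenvectorBasis hn), comp_apply,
    hT.apply_eigenvectorBasis, map_smul, inner_smul_right]

lemma IsPositive.trace_comp_nonneg {S T : E →ₗ[𝕜] E} (hS : S.IsPositive) (hT : T.IsPositive) :
    0 ≤ (S ∘ₗ T).trace 𝕜 E := by
  rw [hT.isSymmetric.trace_comp_eq_sum rfl]
  exact Finset.sum_nonneg fun i _ =>
    mul_nonneg (RCLike.ofReal_nonneg.mpr (hT.nonneg_eigenvalues rfl i)) (hS.inner_nonneg_right _)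

lemma IsPositive.trace_comp_mono {S₁ S₂ T : E →ₗ[𝕜] E} (hT : T.IsPositive) (h : S₁ ≤ S₂) :
    (S₁ ∘ₗ T).trace 𝕜 E ≤ (S₂ ∘ₗ T).trace 𝕜 E := by
  rw [← sub_nonneg, ← map_sub, ← sub_comp]
  exact h.trace_comp_nonneg hT

end LinearMap

open LinearMap in
theorem low_energy_density_overlap_general {H : Type*} [NormedAddCommGroup H]
    [InnerProductSpace ℂ H] [FiniteDimensional ℂ H]
    (A : H →ₗ[ℂ] H)
    (hHerm : ∀ x y : H, ⟪A x, y⟫ = ⟪x, A y⟫)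
    (ψ : H) (hψ : ‖ψ‖ = 1) (hground : A ψ = 0)
    (hgap : ∀ φ : H, ⟪ψ, φ⟫ = 0 → (⟪φ, A φ⟫).re ≥ (3 / 4) * ‖φ‖ ^ 2)
    (ρ : H →ₗ[ℂ] H)
    (hρHerm : ∀ x y : H, ⟪ρ x, y⟫ = ⟪x, ρ y⟫)
    (hρpos : ∀ v : H, 0 ≤ (⟪v, ρ v⟫).re)
    (hρtr : LinearMap.trace ℂ H ρ = 1)
    (ε : ℝ)
    (hE : (LinearMap.trace ℂ H (A ∘ₗ ρ)).re ≤ ε) :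
    (⟪ψ, ρ ψ⟫).re ≥ 1 - (4 / 3) * ε := by
  have hρ : ρ.IsPositive := ⟨hρHerm, fun v => inner_re_symm (𝕜 := ℂ) v _ ▸ hρpos v⟩
  have hA : ((3 / 4 : ℝ) : ℂ) • (1 - (rankOne ℂ ψ ψ : H →ₗ[ℂ] H)) ≤ A :=
    smul_one_sub_rankOne_le_of_gap hHerm hψ hground hgap
  have hbound : ((3 / 4 : ℝ) : ℂ) * (1 - ⟪ψ, ρ ψ⟫) ≤ trace ℂ H (A ∘ₗ ρ) := by
    simpa only [smul_comp, sub_comp, Module.End.one_eq_id, id_comp, map_smul, map_sub,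
      trace_rankOne_comp, hρtr, smul_eq_mul] using hρ.trace_comp_mono hA
  have hbound_re := (Complex.le_def.mp hbound).1
  rw [Complex.re_ofReal_mul, Complex.sub_re, Complex.one_re] at hbound_re
  linarith

/-- **Mixed-state overlap bound underlying Theorem A.7.** Let `A` be a Hermitian
operator on a nonzero finite-dimensional complex inner product space with unit ground
state `ψ` of eigenvalue `0` and spectral gap at least `3/4` (i.e.
`⟨φ, A φ⟩ ≥ (3/4)‖φ‖²` for all `φ ⊥ ψ`). Let `ρ` be a density operator (positive
semidefinite of trace `1`) with `Tr(A ρ) ≤ ε` for some `0 < ε < 1`. Then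
`⟨ψ, ρ ψ⟩ ≥ 1 − (4/3)ε`. -/
theorem low_energy_density_overlap {H : Type*} [NormedAddCommGroup H]
    [InnerProductSpace ℂ H] [FiniteDimensional ℂ H] [Nontrivial H]
    (A : H →ₗ[ℂ] H)
    (hHerm : ∀ x y : H, ⟪A x, y⟫ = ⟪x, A y⟫)
    (ψ : H) (hψ : ‖ψ‖ = 1) (hground : A ψ = 0)
    (hgap : ∀ φ : H, ⟪ψ, φ⟫ = 0 → (⟪φ, A φ⟫).re ≥ (3 / 4) * ‖φ‖ ^ 2)
    (ρ : H →ₗ[ℂ] H)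
    (hρHerm : ∀ x y : H, ⟪ρ x, y⟫ = ⟪x, ρ y⟫)
    (hρpos : ∀ v : H, 0 ≤ (⟪v, ρ v⟫).re)
    (hρtr : LinearMap.trace ℂ H ρ = 1)
    (ε : ℝ) (hε0 : 0 < ε) (hε1 : ε < 1)
    (hE : (LinearMap.trace ℂ H (A ∘ₗ ρ)).re ≤ ε) :
    (⟪ψ, ρ ψ⟫).re ≥ 1 - (4 / 3) * ε :=
  low_energy_density_overlap_general A hHerm ψ hψ hground hgap ρ hρHerm hρpos hρtr ε hE
end

section
/- Kernel and spectral gap of the clock Hamiltonian: For T ≥ 2, let H_clock = ∑_{t=1}^{T−1} |01⟩⟨01|_{t,t+1} acting on the T-qubit space (ℂ²)^{⊗T}. Then (i) the kernel of H_clock is exactly the span of the T+1 unary computational basis states |1^t 0^{T−t}⟩ for t = 0, 1, …, T (i.e., basis strings of the form 1…10…0); and (ii) for every vector φ orthogonal to this kernel, ⟨φ, H_clock φ⟩ ≥ ‖φ‖², i.e., λ(H_clock|_{K⊥}) ≥ 1 where K = ker H_clock. -/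
open scoped ComplexInnerProductSpace

/-- The diagonal operator on the `q`-qubit space `(ℂ²)^{⊗q}` (with computational basis
indexed by bit strings `Fin q → Bool`) whose diagonal entries are given by `c`. -/
noncomputable def qubitDiag {q : ℕ} (c : (Fin q → Bool) → ℂ) :
    EuclideanSpace ℂ (Fin q → Bool) →ₗ[ℂ] EuclideanSpace ℂ (Fin q → Bool) where
  toFun f := WithLp.toLp 2 (fun b => c b * f b)
  map_add' f g := by
    ext b
    simp [mul_add]
  map_smul' a f := by
    ext b
    simp [smul_eq_mul]
    ring

/-- The projector `|01⟩⟨01|_{s,t}` onto computational basis states `b` with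
`b_s = 0` and `b_t = 1`. -/
noncomputable def proj01 {q : ℕ} (s t : Fin q) :
    EuclideanSpace ℂ (Fin q → Bool) →ₗ[ℂ] EuclideanSpace ℂ (Fin q → Bool) :=
  qubitDiag (fun b => if b s = false ∧ b t = true then 1 else 0)

/-- The clock Hamiltonian `H_clock = ∑_{t=0}^{T−2} |01⟩⟨01|_{t,t+1}` on `T = n + 2`
qubits. -/
noncomputable def Hclock (n : ℕ) :
    EuclideanSpace ℂ (Fin (n + 2) → Bool) →ₗ[ℂ] EuclideanSpace ℂ (Fin (n + 2) → Bool) :=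
  ∑ t : Fin (n + 1), proj01 t.castSucc t.succ

/-- The unary clock basis state `|1^t 0^{T−t}⟩` for `0 ≤ t ≤ T`, as an element of the
`T`-qubit space (`T = n + 2`, `t : Fin (n + 3)`). -/
noncomputable def unaryState (n : ℕ) (t : Fin (n + 3)) :
    EuclideanSpace ℂ (Fin (n + 2) → Bool) :=
  EuclideanSpace.single (fun i : Fin (n + 2) => decide ((i : ℕ) < (t : ℕ))) (1 : ℂ)

/-!
`H_clock` is diagonal in the computational basis: its eigenvalue on `|b⟩` is the number of
ascents `01` in `b`. A bit string without ascents is antitone, i.e. of unary form `1^t 0^{T−t}`,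
so the kernel is spanned by the unary states, while every other basis state has eigenvalue at
least `1`; a vector orthogonal to the kernel is supported on the latter states.
-/

open Finset LinearMap Submodule

section QubitDiag

variable {q : ℕ}

@[simp]
lemma qubitDiag_apply (c : (Fin q → Bool) → ℂ) (f : EuclideanSpace ℂ (Fin q → Bool))
    (b : Fin q → Bool) : qubitDiag c f b = c b * f b :=
  rfl

lemma sum_qubitDiag {ι : Type*} (s : Finset ι) (c : ι → (Fin q → Bool) → ℂ) :
    ∑ i ∈ s, qubitDiag (c i) = qubitDiag (fun b => ∑ i ∈ s, c i b) := by
  refine LinearMap.ext fun f => ?_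
  ext b
  simp [WithLp.ofLp_sum, Finset.sum_mul]

lemma mem_ker_qubitDiag_iff {c : (Fin q → Bool) → ℂ} {f : EuclideanSpace ℂ (Fin q → Bool)} :
    f ∈ ker (qubitDiag c) ↔ ∀ b, c b ≠ 0 → f b = 0 := by
  simp only [mem_ker, PiLp.ext_iff, qubitDiag_apply, PiLp.zero_apply, mul_eq_zero,
    or_iff_not_imp_left]

lemma ker_qubitDiag (c : (Fin q → Bool) → ℂ) :
    ker (qubitDiag c) = span ℂ ((EuclideanSpace.single · 1) '' {b | c b = 0}) := by
  apply le_antisymm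
  · intro f hf
    rw [← (EuclideanSpace.basisFun _ ℂ).sum_repr f]
    refine sum_mem fun b _ => ?_
    by_cases hb : c b = 0
    · exact smul_mem _ _ (subset_span ⟨b, hb, by simp⟩)
    · simp [mem_ker_qubitDiag_iff.1 hf b hb]
  · rw [span_le]
    rintro _ ⟨b, hb, rfl⟩
    rw [SetLike.mem_coe, mem_ker_qubitDiag_iff]
    intro b' hb'
    rw [PiLp.single_apply, if_neg]
    rintro rfl
    exact hb' hb

lemma apply_eq_zero_of_mem_orthogonal_ker_qubitDiag {c : (Fin q → Bool) → ℂ}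
    {φ : EuclideanSpace ℂ (Fin q → Bool)} (hφ : φ ∈ (ker (qubitDiag c))ᗮ) {b : Fin q → Bool}
    (hb : c b = 0) : φ b = 0 := by
  have hsingle : EuclideanSpace.single b 1 ∈ ker (qubitDiag c) := by
    rw [ker_qubitDiag]
    exact subset_span ⟨b, hb, rfl⟩
  simpa [EuclideanSpace.inner_single_left] using hφ _ hsingle

lemma re_inner_qubitDiag_self (c : (Fin q → Bool) → ℂ) (φ : EuclideanSpace ℂ (Fin q → Bool)) :
    (⟪φ, qubitDiag c φ⟫).re = ∑ b, (c b).re * ‖φ b‖ ^ 2 := by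
  rw [PiLp.inner_apply, Complex.re_sum]
  refine sum_congr rfl fun b _ => ?_
  rw [qubitDiag_apply, RCLike.inner_apply, mul_assoc, RCLike.mul_conj]
  norm_cast
  exact Complex.re_mul_ofReal _ _

lemma norm_sq_le_re_inner_qubitDiag {c : (Fin q → Bool) → ℂ} (hc : ∀ b, c b ≠ 0 → 1 ≤ (c b).re)
    {φ : EuclideanSpace ℂ (Fin q → Bool)} (hφ : φ ∈ (ker (qubitDiag c))ᗮ) :
    ‖φ‖ ^ 2 ≤ (⟪φ, qubitDiag c φ⟫).re := by
  rw [re_inner_qubitDiag_self, EuclideanSpace.norm_sq_eq]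
  refine sum_le_sum fun b _ => ?_
  by_cases hb : c b = 0
  · simp [apply_eq_zero_of_mem_orthogonal_ker_qubitDiag hφ hb]
  · exact le_mul_of_one_le_left (by positivity) (hc b hb)

end QubitDiag

section Ascents

variable {k : ℕ}

def ascentCount (b : Fin (k + 1) → Bool) : ℕ :=
  #{i : Fin k | b i.castSucc < b i.succ}

lemma ascentCount_eq_zero_iff {b : Fin (k + 1) → Bool} : ascentCount b = 0 ↔ Antitone b := by
  simp [ascentCount, filter_eq_empty_iff, Fin.antitone_iff_succ_le]

lemma Fin.antitone_bool_iff_exists_eq_decide_lt (b : Fin k → Bool) :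
    Antitone b ↔ ∃ t : Fin (k + 1), b = fun i : Fin k => decide ((i : ℕ) < t) := by
  constructor
  · intro hb
    have hb' : ∀ {i j}, i ≤ j → b j = true → b i = true := fun hij => Bool.le_iff_imp.1 (hb hij)
    set S := ({i | b i = true} : Finset (Fin k))
    refine ⟨⟨#S, Nat.lt_succ_of_le (by simpa using card_le_univ S)⟩, funext fun i => ?_⟩
    cases hbi : b i
    · have hsub : S ⊆ Iio i := fun j hj => mem_Iio.2 <| lt_of_not_ge fun hij => by
        simp_all [hb' hij (mem_filter.1 hj).2]
      have := card_le_card hsub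
      simp only [Fin.card_Iio] at this
      simp [this]
    · have hsub : Iic i ⊆ S := fun j hj => mem_filter.2 ⟨mem_univ _, hb' (mem_Iic.1 hj) hbi⟩
      have := card_le_card hsub
      simp only [Fin.card_Iic] at this
      simp only [true_eq_decide_iff]
      omega
  · rintro ⟨t, rfl⟩ i j hij
    simpa [Bool.le_iff_imp] using lt_of_le_of_lt (Fin.le_def.1 hij)

end Ascents

lemma Hclock_eq_qubitDiag (n : ℕ) : Hclock n = qubitDiag (fun b => (ascentCount b : ℂ)) := by
  simp only [Hclock, proj01, sum_qubitDiag, ascentCount, Bool.lt_iff, sum_boole]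

/-- **Kernel and spectral gap of the clock Hamiltonian.** For `T = n + 2 ≥ 2`:
(i) the kernel of `H_clock` is exactly the span of the `T + 1` unary computational
basis states `|1^t 0^{T−t}⟩`, `t = 0, …, T`; and
(ii) every `φ` orthogonal to this kernel satisfies `⟨φ, H_clock φ⟩ ≥ ‖φ‖²`,
i.e. `λ(H_clock|_{K⊥}) ≥ 1` where `K = ker H_clock`. -/
theorem clock_hamiltonian_kernel_and_gap (n : ℕ) :
    LinearMap.ker (Hclock n) = Submodule.span ℂ (Set.range (unaryState n)) ∧
      ∀ φ : EuclideanSpace ℂ (Fin (n + 2) → Bool),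
        φ ∈ (LinearMap.ker (Hclock n))ᗮ → (⟪φ, (Hclock n) φ⟫).re ≥ ‖φ‖ ^ 2 := by
  have hunary : {b | (ascentCount b : ℂ) = 0} =
      Set.range fun (t : Fin (n + 3)) (i : Fin (n + 2)) => decide ((i : ℕ) < t) := by
    ext b
    rw [Set.mem_ofPred_eq, Nat.cast_eq_zero, ascentCount_eq_zero_iff,
      Fin.antitone_bool_iff_exists_eq_decide_lt]
    exact exists_congr fun _ => eq_comm
  rw [Hclock_eq_qubitDiag]
  refine ⟨?_, fun φ hφ => norm_sq_le_re_inner_qubitDiag (fun b hb => ?_) hφ⟩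
  · rw [ker_qubitDiag, hunary, ← Set.range_comp]
    rfl
  · simpa [Nat.one_le_iff_ne_zero] using hb
end
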